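/- arXiv:2008.00265 — 5 statements merged into one kernel-verified Lean document; each statement's English description precedes it below -/
import Mathlib

section
/- Let X be a path connected, locally path connected, semilocally simply connected topological space. For any x, y ∈ X, the set Π(X)(x,y) of homotopy classes rel endpoints of paths from x to y is a discrete subspace of the topological fundamental groupoid Π(X). -/
open unitInterval

/-- Homotopy rel endpoints between two continuous paths `[0,1] → X`. -/
def PathHomotopicRel {X : Type*} [TopologicalSpace X] (c c' : C(I, X)) : Prop :=
  c 0 = c' 0 ∧ c 1 = c' 1 ∧
    ∃ H : C(I × I, X),
      (∀ t, H (0, t) = c t) ∧ (∀ t, H (1, t) = c' t) ∧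
      (∀ s, H (s, 0) = c 0) ∧ (∀ s, H (s, 1) = c 1)

/-- The topological fundamental groupoid: homotopy classes rel endpoints of paths,
with the quotient of the compact-open topology. -/
abbrev FundGroupoidSpace (X : Type*) [TopologicalSpace X] : Type _ :=
  Quot (PathHomotopicRel (X := X))

/-- The start/endpoint map `(s,e) : Π(X) → X × X`. -/
def startEndMap {X : Type*} [TopologicalSpace X] : FundGroupoidSpace X → X × X :=
  Quot.lift (fun c => (c 0, c 1)) fun _ _ h => Prod.ext h.1 h.2.1

/-- `X` is semilocally simply connected: every point has a neighborhood all of whose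
loops are null-homotopic in `X`. -/
def SemilocSimplyConnected (X : Type*) [TopologicalSpace X] : Prop :=
  ∀ x : X, ∃ U ∈ nhds x, ∀ c : C(I, X), (∀ t, c t ∈ U) → c 1 = c 0 →
    PathHomotopicRel c (ContinuousMap.const I (c 0))

/-!
A class `[c] ∈ Π(X)(x, y)` is isolated in its fibre by the basic neighbourhood
`{[α⁻¹ · c · β]}`, where `α`, `β` run over paths starting at `x`, `y` inside neighbourhoods
`U₀`, `U₁` in which all loops are null-homotopic: if `α` and `β` are loops, they are
null-homotopic, so `α⁻¹ · c · β ≃ c`. The substance is that this set is open, i.e. that its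
preimage in `C(I, X)` is open. Subdivide `I` so that `c` maps each piece `[tₖ, tₖ₊₁]` into an
open set all of whose loops are null-homotopic. A path `g` close to `c` maps the same pieces into
the same sets and has each `g tₖ` joined to `c tₖ` by a path `γₖ` in a small path-connected
neighbourhood; piece by piece `g ≃ γ₀⁻¹ · c · γₙ`.
-/

open Set Filter Topology

section

variable {X : Type*} [TopologicalSpace X]

def ContinuousMap.toPath (c : C(I, X)) : Path (c 0) (c 1) := ⟨c, rfl, rfl⟩

@[simp]
theorem ContinuousMap.coe_toPath (c : C(I, X)) : ⇑c.toPath = c := rfl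

@[simp]
theorem ContinuousMap.toPath_subpath_zero_one (c : C(I, X)) :
    c.toPath.subpath 0 1 = c.toPath := by
  ext; simp

theorem Path.homotopic_iff_pathHomotopicRel {a b : X} {p q : Path a b} :
    p.Homotopic q ↔ PathHomotopicRel p.toContinuousMap q.toContinuousMap := by
  constructor
  · rintro ⟨F⟩
    exact ⟨p.source.trans q.source.symm, p.target.trans q.target.symm, F.toContinuousMap,
      F.apply_zero, F.apply_one, fun s => (F.source s).trans p.source.symm,
      fun s => (F.target s).trans p.target.symm⟩
  · rintro ⟨-, -, H, H0, H1, Hs0, Hs1⟩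
    refine ⟨{ toContinuousMap := H, map_zero_left := H0, map_one_left := H1, prop' := ?_ }⟩
    rintro s t (rfl | rfl)
    · exact Hs0 s
    · exact Hs1 s

namespace PathHomotopicRel

variable {f g : C(I, X)}

theorem homotopic (h : PathHomotopicRel f g) :
    (f.toPath.cast h.1.symm h.2.1.symm).Homotopic g.toPath :=
  Path.homotopic_iff_pathHomotopicRel.mpr h

theorem symm (h : PathHomotopicRel f g) : PathHomotopicRel g f :=
  Path.homotopic_iff_pathHomotopicRel.mp h.homotopic.symm

end PathHomotopicRel

def LoopsNullhomotopicIn (U : Set X) : Prop :=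
  ∀ ⦃u : X⦄ (γ : Path u u), range γ ⊆ U → γ.Homotopic (Path.refl u)

theorem SemilocSimplyConnected.exists_isOpen_loopsNullhomotopicIn
    (hX : SemilocSimplyConnected X) (x : X) :
    ∃ U, IsOpen U ∧ x ∈ U ∧ LoopsNullhomotopicIn U := by
  obtain ⟨U, hU, hloops⟩ := hX x
  obtain ⟨O, hOU, hO, hxO⟩ := mem_nhds_iff.1 hU
  refine ⟨O, hO, hxO, fun u γ hγ => Path.homotopic_iff_pathHomotopicRel.mpr ?_⟩
  have := hloops γ.toContinuousMap (fun t => hOU (hγ ⟨t, rfl⟩)) (γ.target.trans γ.source.symm)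
  rwa [show γ.toContinuousMap 0 = u from γ.source] at this

namespace LoopsNullhomotopicIn

variable {U : Set X}

theorem homotopic_conj (hU : LoopsNullhomotopicIn U) {a b a' b' : X} {p : Path a b}
    {q : Path a' b'} {γ : Path a a'} {δ : Path b b'} (hp : range p ⊆ U) (hq : range q ⊆ U)
    (hγ : range γ ⊆ U) (hδ : range δ ⊆ U) : q.Homotopic (γ.symm.trans (p.trans δ)) := by
  have hloop := hU (γ.symm.trans (p.trans (δ.trans q.symm))) (by
    simp only [Path.trans_range, Path.symm_range]
    exact union_subset hγ (union_subset hp (union_subset hδ hq)))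
  rw [← Path.Homotopic.Quotient.eq] at hloop ⊢
  simp only [Path.Homotopic.Quotient.mk_trans, Path.Homotopic.Quotient.mk_symm,
    Path.Homotopic.Quotient.mk_refl] at hloop ⊢
  calc _ = ((Path.Homotopic.Quotient.refl a').trans (.mk q)) := by simp
    _ = _ := by rw [← hloop]; simp

theorem homotopic_of_homotopic_conj {V : Set X} (hU : LoopsNullhomotopicIn U)
    (hV : LoopsNullhomotopicIn V) {a b : X} {p q : Path a b} {α : Path a a} {β : Path b b}
    (hα : range α ⊆ U) (hβ : range β ⊆ V) (h : q.Homotopic (α.symm.trans (p.trans β))) :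
    q.Homotopic p := by
  refine h.trans (((hU α hα).symm₂.hcomp ((Path.Homotopic.refl p).hcomp (hV β hβ))).trans ?_)
  rw [Path.refl_symm, ← Path.Homotopic.Quotient.eq]
  simp

end LoopsNullhomotopicIn

theorem Path.Homotopic.Quotient.mk_subpath_trans_mk_subpath {a b : X} (γ : Path a b)
    (t₀ t₁ t₂ : I) :
    (mk (γ.subpath t₀ t₁)).trans (mk (γ.subpath t₁ t₂)) = mk (γ.subpath t₀ t₂) :=
  eq.mpr ⟨Path.Homotopy.subpathTransSubpath γ t₀ t₁ t₂⟩

theorem Path.range_subpath_subset {a b : X} {γ : Path a b} {t₀ t₁ : I} (h : t₀ ≤ t₁) {U : Set X}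
    (hU : MapsTo γ (Icc t₀ t₁) U) : range (γ.subpath t₀ t₁) ⊆ U := by
  rw [Path.range_subpath_of_le _ _ _ h]
  exact hU.image_subset

theorem Path.exists_subpath_homotopic_conj {a b a' b' : X} (f : Path a b) (g : Path a' b')
    {t : ℕ → I} (ht : Monotone t) {V W : ℕ → Set X}
    (hV : ∀ k, LoopsNullhomotopicIn (V k)) (n : ℕ)
    (hf : ∀ k < n, MapsTo f (Icc (t k) (t (k + 1))) (V k))
    (hg : ∀ k < n, MapsTo g (Icc (t k) (t (k + 1))) (V k))
    (hWV : ∀ k < n, W k ⊆ V k ∧ W (k + 1) ⊆ V k)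
    (hW : ∀ k ≤ n, JoinedIn (W k) (f (t k)) (g (t k))) :
    ∃ (γ₀ : Path (f (t 0)) (g (t 0))) (γ₁ : Path (f (t n)) (g (t n))),
      range γ₀ ⊆ W 0 ∧ range γ₁ ⊆ W n ∧
      (g.subpath (t 0) (t n)).Homotopic (γ₀.symm.trans ((f.subpath (t 0) (t n)).trans γ₁)) := by
  induction n with
  | zero =>
    obtain ⟨γ, hγ⟩ := hW 0 le_rfl
    refine ⟨γ, γ, range_subset_iff.2 hγ, range_subset_iff.2 hγ, ?_⟩
    rw [← Path.Homotopic.Quotient.eq]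
    simp
  | succ n ih =>
    obtain ⟨γ₀, γ₁, hγ₀, hγ₁, h⟩ := ih (fun k hk => hf k (by omega)) (fun k hk => hg k (by omega))
      (fun k hk => hWV k (by omega)) (fun k hk => hW k (by omega))
    obtain ⟨δ, hδ⟩ := hW (n + 1) le_rfl
    have htn := ht n.le_succ
    have hstep := (hV n).homotopic_conj (Path.range_subpath_subset htn (hf n n.lt_succ_self))
      (Path.range_subpath_subset htn (hg n n.lt_succ_self)) (hγ₁.trans (hWV n n.lt_succ_self).1)
      ((range_subset_iff.2 hδ).trans (hWV n n.lt_succ_self).2)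
    refine ⟨γ₀, δ, hγ₀, range_subset_iff.2 hδ, ?_⟩
    rw [← Path.Homotopic.Quotient.eq] at h hstep ⊢
    simp only [Path.Homotopic.Quotient.mk_trans, Path.Homotopic.Quotient.mk_symm] at h hstep ⊢
    rw [← Path.Homotopic.Quotient.mk_subpath_trans_mk_subpath g _ (t n),
      ← Path.Homotopic.Quotient.mk_subpath_trans_mk_subpath f _ (t n), h, hstep]
    simp [← Path.Homotopic.Quotient.trans_assoc (.mk γ₁)]

theorem SemilocSimplyConnected.eventually_homotopic_conj [LocallyPathConnectedSpace X]
    (hX : SemilocSimplyConnected X) (f : C(I, X)) {U₀ U₁ : Set X} (hU₀ : U₀ ∈ 𝓝 (f 0))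
    (hU₁ : U₁ ∈ 𝓝 (f 1)) :
    ∀ᶠ g in 𝓝 f, ∃ (γ₀ : Path (f 0) (g 0)) (γ₁ : Path (f 1) (g 1)),
      range γ₀ ⊆ U₀ ∧ range γ₁ ⊆ U₁ ∧ g.toPath.Homotopic (γ₀.symm.trans (f.toPath.trans γ₁)) := by
  choose V hVo hfV hV using fun s : I => hX.exists_isOpen_loopsNullhomotopicIn (f s)
  obtain ⟨t, ht0, ht, ⟨N, htN⟩, hcover⟩ := exists_monotone_Icc_subset_open_cover_unitInterval
    (c := fun s => f ⁻¹' V s) (fun s => (hVo s).preimage f.continuous)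
    (fun s _ => mem_iUnion.2 ⟨s, hfV s⟩)
  choose i hi using hcover
  have hA : ∀ k, ∀ᶠ z in 𝓝 (f (t k)), z ∈ V (i k) ∧ (k ≠ 0 → z ∈ V (i (k - 1))) ∧
      (k = 0 → z ∈ U₀) ∧ (k = N → z ∈ U₁) := by
    intro k
    refine ((hVo _).eventually_mem (hi k ⟨le_rfl, ht k.le_succ⟩)).and
      ((eventually_imp_distrib_left.2 fun hk => ?_).and
        ((eventually_imp_distrib_left.2 fun hk => ?_).and
          (eventually_imp_distrib_left.2 fun hk => ?_)))
    · exact (hVo _).eventually_mem (hi (k - 1) ⟨ht (Nat.sub_le k 1), ht (by omega)⟩)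
    · rwa [hk, ht0]
    · rwa [hk, htN N le_rfl]
  choose W hW hWA using fun k => (path_connected_basis (f (t k))).mem_iff.mp (hA k)
  have hnear : ∀ᶠ g : C(I, X) in 𝓝 f,
      (∀ k < N, MapsTo g (Icc (t k) (t (k + 1))) (V (i k))) ∧ ∀ k ≤ N, g (t k) ∈ W k :=
    ((finite_Iio N).eventually_all.2 fun k _ =>
      ContinuousMap.eventually_mapsTo isCompact_Icc (hVo _) (hi k)).and
    ((finite_Iic N).eventually_all.2 fun k _ =>
      (continuous_eval_const (t k)).continuousAt.preimage_mem_nhds (hW k).1)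
  filter_upwards [hnear] with g ⟨hgV, hgW⟩
  have hchain := f.toPath.exists_subpath_homotopic_conj g.toPath ht (V := fun k => V (i k))
    (fun k => hV _) N (fun k _ => hi k) hgV
    (fun k _ => ⟨fun z hz => (hWA k hz).1, fun z hz => by simpa using (hWA (k + 1) hz).2.1⟩)
    (fun k hk => (hW k).2.joinedIn _ (mem_of_mem_nhds (hW k).1) _ (hgW k hk))
  rw [ht0, htN N le_rfl, ContinuousMap.toPath_subpath_zero_one,
    ContinuousMap.toPath_subpath_zero_one] at hchain
  obtain ⟨γ₀, γ₁, hγ₀, hγ₁, h⟩ := hchain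
  exact ⟨γ₀, γ₁, fun z hz => (hWA 0 (hγ₀ hz)).2.2.1 rfl, fun z hz => (hWA N (hγ₁ hz)).2.2.2 rfl, h⟩

/-- The preimage in `C(I, X)` of the basic neighbourhood `{[α⁻¹ · p · β]}` of `[p]` in `Π(X)`. -/
def pathClassNbhd (U₀ : Set X) {a b : X} (p : Path a b) (U₁ : Set X) : Set C(I, X) :=
  {f | ∃ (α : Path a (f 0)) (β : Path b (f 1)), range α ⊆ U₀ ∧ range β ⊆ U₁ ∧
    f.toPath.Homotopic (α.symm.trans (p.trans β))}

section pathClassNbhd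

variable {U₀ U₁ : Set X} {a b : X} {p : Path a b}

theorem mem_pathClassNbhd_self {c : C(I, X)} (h₀ : c 0 ∈ U₀) (h₁ : c 1 ∈ U₁) :
    c ∈ pathClassNbhd U₀ c.toPath U₁ := by
  refine ⟨Path.refl _, Path.refl _, by simpa, by simpa, ?_⟩
  rw [← Path.Homotopic.Quotient.eq]
  simp

theorem PathHomotopicRel.mem_pathClassNbhd {f g : C(I, X)} (h : PathHomotopicRel f g)
    (hf : f ∈ pathClassNbhd U₀ p U₁) : g ∈ pathClassNbhd U₀ p U₁ := by
  obtain ⟨α, β, hα, hβ, hf⟩ := hf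
  exact ⟨α.cast rfl h.1.symm, β.cast rfl h.2.1.symm, hα, hβ,
    h.homotopic.symm.trans (hf.pathCast h.1.symm h.2.1.symm)⟩

theorem PathHomotopicRel.mem_pathClassNbhd_iff {f g : C(I, X)} (h : PathHomotopicRel f g) :
    f ∈ pathClassNbhd U₀ p U₁ ↔ g ∈ pathClassNbhd U₀ p U₁ :=
  ⟨h.mem_pathClassNbhd, h.symm.mem_pathClassNbhd⟩

theorem SemilocSimplyConnected.isOpen_pathClassNbhd [LocallyPathConnectedSpace X]
    (hX : SemilocSimplyConnected X) (hU₀ : IsOpen U₀) (hU₁ : IsOpen U₁) :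
    IsOpen (pathClassNbhd U₀ p U₁) := by
  refine isOpen_iff_mem_nhds.2 fun f ⟨α, β, hα, hβ, hf⟩ => ?_
  filter_upwards [hX.eventually_homotopic_conj f (hU₀.mem_nhds (hα ⟨1, α.target⟩))
    (hU₁.mem_nhds (hβ ⟨1, β.target⟩))] with g ⟨γ₀, γ₁, hγ₀, hγ₁, hg⟩
  refine ⟨α.trans γ₀, β.trans γ₁, by simp [Path.trans_range, hα, hγ₀],
    by simp [Path.trans_range, hβ, hγ₁], hg.trans ?_⟩
  rw [← Path.Homotopic.Quotient.eq] at hf ⊢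
  simp [Path.trans_symm, hf]

theorem LoopsNullhomotopicIn.pathHomotopicRel_of_mem_pathClassNbhd
    (hU₀ : LoopsNullhomotopicIn U₀) (hU₁ : LoopsNullhomotopicIn U₁) {c g : C(I, X)}
    (hg : g ∈ pathClassNbhd U₀ c.toPath U₁) (h0 : g 0 = c 0) (h1 : g 1 = c 1) :
    PathHomotopicRel c g := by
  obtain ⟨α, β, hα, hβ, hg⟩ := hg
  exact Path.homotopic_iff_pathHomotopicRel.mp
    (hU₀.homotopic_of_homotopic_conj hU₁ (α := α.cast rfl h0.symm) (β := β.cast rfl h1.symm)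
      hα hβ (hg.pathCast h0.symm h1.symm)).symm

end pathClassNbhd

end

theorem stmt2_general {X : Type*} [TopologicalSpace X]
    [LocallyPathConnectedSpace X] (hX : SemilocSimplyConnected X) (x y : X) :
    DiscreteTopology {q : FundGroupoidSpace X // startEndMap q = (x, y)} := by
  refine discreteTopology_subtype_iff'.mpr ?_
  rintro ⟨c⟩ hc
  obtain ⟨U₀, hU₀, hcU₀, hU₀null⟩ := hX.exists_isOpen_loopsNullhomotopicIn (c 0)
  obtain ⟨U₁, hU₁, hcU₁, hU₁null⟩ := hX.exists_isOpen_loopsNullhomotopicIn (c 1)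
  let V : Set (FundGroupoidSpace X) := {q | Quot.lift (· ∈ pathClassNbhd U₀ c.toPath U₁)
    (fun _ _ h => propext h.mem_pathClassNbhd_iff) q}
  refine ⟨V, isOpen_coinduced.2 (hX.isOpen_pathClassNbhd hU₀ hU₁), ?_⟩
  ext ⟨g⟩
  refine ⟨fun ⟨hgV, hg⟩ => ?_, fun hg => ?_⟩
  · have hgc : (g 0, g 1) = (c 0, c 1) := hg.trans hc.symm
    exact (Quot.sound (hU₀null.pathHomotopicRel_of_mem_pathClassNbhd hU₁null hgV
      (congrArg Prod.fst hgc) (congrArg Prod.snd hgc))).symm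
  · rw [mem_singleton_iff.mp hg]
    exact ⟨mem_pathClassNbhd_self hcU₀ hcU₁, hc⟩

theorem stmt2 {X : Type*} [TopologicalSpace X] [PathConnectedSpace X]
    [LocallyPathConnectedSpace X] (hX : SemilocSimplyConnected X) (x y : X) :
    DiscreteTopology {q : FundGroupoidSpace X // startEndMap q = (x, y)} :=
  stmt2_general hX x y
end

section
/- If X is a simply connected topological space, then the start/endpoint map (s,e): Π(X) → X × X from the topological fundamental groupoid is a homeomorphism. -/
open unitInterval

/-!
Continuity is clear and bijectivity is simple connectivity. The substance is that
`c ↦ (c 0, c 1)` is open on `C(I, X)`. Every compact-open neighbourhood of `c` contains all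
paths whose graph stays in some open set `G ⊇ graph c`. Near the ends of the graph, `G` contains
`[0, δ₀] × V₀` and `[δ₁, 1] × V₁` for path-connected neighbourhoods `V₀ ∋ c 0`, `V₁ ∋ c 1`; for
`x ∈ V₀`, `y ∈ V₁`, replacing `c` on `[0, δ₀]` by a path in `V₀` from `x` to `c δ₀` and on
`[δ₁, 1]` by a path in `V₁` from `c δ₁` to `y` gives a path from `x` to `y` with graph in `G`.
-/

open Set Filter Topology

namespace ContinuousMap

theorem exists_isOpen_tube_of_mem_nhds {Y X : Type*} [TopologicalSpace Y] [T2Space Y]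
    [TopologicalSpace X] {c : C(Y, X)} {N : Set C(Y, X)} (hN : N ∈ 𝓝 c) :
    ∃ G : Set (Y × X), IsOpen G ∧ (∀ t, (t, c t) ∈ G) ∧
      ∀ f : C(Y, X), (∀ t, (t, f t) ∈ G) → f ∈ N := by
  let Tube := {G : Set (Y × X) // IsOpen G ∧ ∀ t, (t, c t) ∈ G}
  let graphIn (G : Tube) : Set C(Y, X) := {f | ∀ t, (t, f t) ∈ G.1}
  have : Nonempty Tube := ⟨⟨univ, isOpen_univ, fun _ => trivial⟩⟩
  have hbasis : (⨅ G, 𝓟 (graphIn G)).HasBasis (fun _ => True) graphIn :=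
    hasBasis_iInf_principal fun G₁ G₂ => ⟨⟨G₁.1 ∩ G₂.1, G₁.2.1.inter G₂.2.1,
      fun t => ⟨G₁.2.2 t, G₂.2.2 t⟩⟩, fun f hf t => (hf t).1, fun f hf t => (hf t).2⟩
  -- `f '' K ⊆ U` says exactly that the graph of `f` lies in the open set `Kᶜ × X ∪ Y × U`.
  have hle : ⨅ G, 𝓟 (graphIn G) ≤ 𝓝 c := by
    refine tendsto_id'.1 (tendsto_nhds_compactOpen.2 fun K hK U hU hcKU => ?_)
    refine hbasis.mem_iff.2 ⟨⟨Kᶜ ×ˢ univ ∪ univ ×ˢ U,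
      (hK.isClosed.isOpen_compl.prod isOpen_univ).union (isOpen_univ.prod hU), fun t => ?_⟩,
      trivial, fun f hf t ht => ?_⟩
    · by_cases ht : t ∈ K
      exacts [Or.inr ⟨trivial, hcKU ht⟩, Or.inl ⟨ht, trivial⟩]
    · exact ((hf t).resolve_left fun h => h.1 ht).2
  obtain ⟨G, -, hG⟩ := hbasis.mem_iff.1 (hle hN)
  exact ⟨G.1, G.2.1, G.2.2, hG⟩

variable {X : Type*} [TopologicalSpace X]

theorem exists_prepend_path {c : C(I, X)} {G : Set (I × X)} (hcG : ∀ t, (t, c t) ∈ G)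
    {δ : I} (hδ : 0 < δ) {V : Set X} (hVG : Iic δ ×ˢ V ⊆ G) {x : X} (hx : JoinedIn V x (c δ)) :
    ∃ f : C(I, X), f 0 = x ∧ (∀ t, δ ≤ t → f t = c t) ∧ ∀ t, (t, f t) ∈ G := by
  let γ := hx.somePath
  have hγ : γ.extend ((δ : ℝ) / δ) = c δ := by
    rw [div_self (coe_pos.2 hδ).ne', Path.extend_one]
  refine ⟨⟨fun t => if t ≤ δ then γ.extend ((t : ℝ) / δ) else c t, ?_⟩, ?_, fun t ht => ?_,
    fun t => ?_⟩
  · refine Continuous.if_le (γ.continuous_extend.comp (continuous_subtype_val.div_const _))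
      c.continuous continuous_id continuous_const ?_
    rintro t rfl
    exact hγ
  · simp [hδ.le]
  · rcases ht.eq_or_lt with rfl | ht
    · simpa using hγ
    · simp [ht.not_ge]
  · dsimp only [ContinuousMap.coe_mk]
    split_ifs with ht
    · exact hVG ⟨ht, hx.somePath_mem _⟩
    · exact hcG t

theorem exists_append_path {c : C(I, X)} {G : Set (I × X)} (hcG : ∀ t, (t, c t) ∈ G)
    {δ : I} (hδ : δ < 1) {V : Set X} (hVG : Ici δ ×ˢ V ⊆ G) {y : X} (hy : JoinedIn V (c δ) y) :
    ∃ f : C(I, X), f 1 = y ∧ (∀ t, t ≤ δ → f t = c t) ∧ ∀ t, (t, f t) ∈ G := by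
  have hσδ : 0 < σ δ := by simpa using symm_lt_symm.2 hδ
  obtain ⟨f, hf1, hfc, hfG⟩ := exists_prepend_path (c := c.comp ⟨σ, continuous_symm⟩)
    (G := Prod.map σ id ⁻¹' G) (by simpa using fun t => hcG (σ t)) hσδ
    (fun p hp => hVG ⟨le_symm_comm.1 hp.1, hp.2⟩) (by simpa using hy.symm)
  refine ⟨f.comp ⟨σ, continuous_symm⟩, by simpa using hf1, fun t ht => ?_, fun t => ?_⟩
  · simpa using hfc (σ t) (symm_le_symm.2 ht)
  · simpa using hfG (σ t)

end ContinuousMap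

theorem unitInterval.exists_Iic_subset_Ici_subset {S₀ S₁ : Set I} (h₀ : S₀ ∈ 𝓝 0)
    (h₁ : S₁ ∈ 𝓝 1) : ∃ δ₀ δ₁ : I, 0 < δ₀ ∧ δ₀ ≤ δ₁ ∧ δ₁ < 1 ∧ Iic δ₀ ⊆ S₀ ∧ Ici δ₁ ⊆ S₁ := by
  obtain ⟨a₀, ha₀, hS₀⟩ := nhds_bot_basis_Iic.mem_iff.1 h₀
  obtain ⟨a₁, ha₁, hS₁⟩ := nhds_top_basis_Ici.mem_iff.1 h₁
  obtain ⟨b₀, hb₀, hba₀⟩ := exists_between ha₀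
  obtain ⟨b₁, hab₁, hb₁⟩ := exists_between ha₁
  exact ⟨min b₀ b₁, max b₀ b₁, lt_min hb₀ (bot_le.trans_lt hab₁), min_le_max,
    max_lt (hba₀.trans_le le_top) hb₁,
    (Iic_subset_Iic.2 ((min_le_left _ _).trans hba₀.le)).trans hS₀,
    (Ici_subset_Ici.2 (hab₁.le.trans (le_max_right _ _))).trans hS₁⟩

theorem exists_isPathConnected_tube {T X : Type*} [TopologicalSpace T] [TopologicalSpace X]
    [LocallyPathConnectedSpace X] {G : Set (T × X)} {t₀ : T} {z : X} (hG : G ∈ 𝓝 (t₀, z)) :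
    ∃ V ∈ 𝓝 z, IsPathConnected V ∧ {t | ∀ x ∈ V, (t, x) ∈ G} ∈ 𝓝 t₀ := by
  obtain ⟨u, hu, W, hW, huW⟩ := mem_nhds_prod_iff.1 hG
  obtain ⟨V, ⟨hV, hVpc⟩, hVW⟩ := (path_connected_basis z).mem_iff.1 hW
  exact ⟨V, hV, hVpc, mem_of_superset hu fun t ht x hx => huW ⟨ht, hVW hx⟩⟩

theorem isOpenMap_eval_zero_one {X : Type*} [TopologicalSpace X] [LocallyPathConnectedSpace X] :
    IsOpenMap fun c : C(I, X) => (c 0, c 1) := by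
  refine isOpenMap_iff_nhds_le.2 fun c => le_map fun N hN => ?_
  obtain ⟨G, hGo, hcG, hGN⟩ := ContinuousMap.exists_isOpen_tube_of_mem_nhds hN
  obtain ⟨V₀, hV₀, hV₀pc, hT₀⟩ := exists_isPathConnected_tube (hGo.mem_nhds (hcG 0))
  obtain ⟨V₁, hV₁, hV₁pc, hT₁⟩ := exists_isPathConnected_tube (hGo.mem_nhds (hcG 1))
  obtain ⟨δ₀, δ₁, hδ₀, hδ₀₁, hδ₁, hS₀, hS₁⟩ := unitInterval.exists_Iic_subset_Ici_subset
    (inter_mem hT₀ (c.continuous.tendsto 0 hV₀)) (inter_mem hT₁ (c.continuous.tendsto 1 hV₁))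
  refine mem_of_superset (prod_mem_nhds hV₀ hV₁) fun ⟨x, y⟩ ⟨hx, hy⟩ => ?_
  have hc₀ : c δ₀ ∈ V₀ := (hS₀ self_mem_Iic).2
  have hc₁ : c δ₁ ∈ V₁ := (hS₁ self_mem_Ici).2
  obtain ⟨f₀, hf₀0, hf₀c, hf₀G⟩ := ContinuousMap.exists_prepend_path hcG hδ₀
    (fun p hp => (hS₀ hp.1).1 _ hp.2) (hV₀pc.joinedIn x hx _ hc₀)
  obtain ⟨f, hf1, hff₀, hfG⟩ := ContinuousMap.exists_append_path hf₀G hδ₁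
    (fun p hp => (hS₁ hp.1).1 _ hp.2)
    (by rw [hf₀c δ₁ hδ₀₁]; exact hV₁pc.joinedIn _ hc₁ y hy)
  exact ⟨f, hGN f hfG, Prod.ext ((hff₀ 0 bot_le).trans hf₀0) hf1⟩

theorem pathHomotopicRel_of_simplyConnected {X : Type*} [TopologicalSpace X]
    [SimplyConnectedSpace X] {c c' : C(I, X)} (h₀ : c 0 = c' 0) (h₁ : c 1 = c' 1) :
    PathHomotopicRel c c' := by
  obtain ⟨H⟩ := SimplyConnectedSpace.paths_homotopic (⟨c, rfl, rfl⟩ : Path (c 0) (c 1))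
    ⟨c', h₀.symm, h₁.symm⟩
  exact ⟨h₀, h₁, H.toContinuousMap, H.apply_zero, H.apply_one, H.source, H.target⟩

theorem stmt3_general {X : Type*} [TopologicalSpace X]
    [LocallyPathConnectedSpace X] [SimplyConnectedSpace X] :
    IsHomeomorph (startEndMap (X := X)) := by
  refine ⟨continuous_quot_lift _ ((continuous_eval_const 0).prodMk (continuous_eval_const 1)),
    fun W hW => ?_, ?_, ?_⟩
  · rw [← image_preimage_eq W Quot.mk_surjective, ← image_comp]
    exact isOpenMap_eval_zero_one _ (hW.preimage continuous_quot_mk)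
  · rintro ⟨c⟩ ⟨c'⟩ h
    exact Quot.sound (pathHomotopicRel_of_simplyConnected (congrArg Prod.fst h)
      (congrArg Prod.snd h))
  · rintro ⟨x, y⟩
    let γ := PathConnectedSpace.somePath x y
    exact ⟨Quot.mk _ γ.toContinuousMap, Prod.ext γ.source γ.target⟩

theorem stmt3 {X : Type*} [TopologicalSpace X] [PathConnectedSpace X]
    [LocallyPathConnectedSpace X] [SimplyConnectedSpace X] :
    IsHomeomorph (startEndMap (X := X)) :=
  stmt3_general
end

section
/- Let F : Π^t(X) → Π^t(Y) be an isomorphism of the timelike homotopy semicategories of two spacetimes, with object map f : X → Y. Then for every timelike path c in X, f maps the refined chronological diamond I_X([c]) bijectively onto I_Y(F([c])). -/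
open unitInterval

/-- A homotopy rel endpoints between `a` and `b` all of whose stages lie in the
given class `P` of paths. -/
def HtpyThrough {X : Type*} [TopologicalSpace X] (P : ∀ x y : X, Set (Path x y))
    {x y : X} (a b : Path x y) : Prop :=
  ∃ H : Path.Homotopy a b, ∀ s : I, H.eval s ∈ P x y

/-- The refined diamond `I_X([c])` (resp. `J_X([c])`) of the `P`-homotopy class of `c`. -/
def diam {X : Type*} [TopologicalSpace X] (P : ∀ x y : X, Set (Path x y))
    {x y : X} (c : Path x y) : Set X :=
  {z | ∃ (a : Path x z) (b : Path z y),
    a ∈ P x z ∧ b ∈ P z y ∧ HtpyThrough P (a.trans b) c}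

/-- The restriction of a path to `[s,t]`, linearly reparametrized to `[0,1]`. -/
def Path.restrictTo {X : Type*} [TopologicalSpace X] {x y : X} (c : Path x y) (s t : I) :
    Path (c s) (c t) where
  toFun u := c ⟨(1 - (u : ℝ)) * s + u * t, by
    have hu0 : (0 : ℝ) ≤ u := u.2.1
    have hu1 : (u : ℝ) ≤ 1 := u.2.2
    have hs0 : (0 : ℝ) ≤ s := s.2.1
    have hs1 : (s : ℝ) ≤ 1 := s.2.2
    have ht0 : (0 : ℝ) ≤ t := t.2.1
    have ht1 : (t : ℝ) ≤ 1 := t.2.2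
    constructor <;> nlinarith⟩
  continuous_toFun := by
    apply c.continuous.comp
    exact Continuous.subtype_mk (by fun_prop) _
  source' := by simp
  target' := by simp

section Helpers

variable {X : Type*} [TopologicalSpace X] {P : ∀ x y : X, Set (Path x y)}

theorem HtpyThrough.symm {x y : X} {a b : Path x y} (h : HtpyThrough P a b) :
    HtpyThrough P b a := by
  obtain ⟨H, hH⟩ := h
  refine ⟨H.symm, fun s => ?_⟩
  have : H.symm.eval s = H.eval (σ s) := by
    ext t
    rfl
  rw [this]; exact hH _

theorem HtpyThrough.trans {x y : X} {a b c : Path x y} (h1 : HtpyThrough P a b)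
    (h2 : HtpyThrough P b c) : HtpyThrough P a c := by
  obtain ⟨H, hH⟩ := h1
  obtain ⟨G, hG⟩ := h2
  refine ⟨H.trans G, fun s => ?_⟩
  by_cases hs : (s : ℝ) ≤ 1 / 2
  · have : (H.trans G).eval s =
        H.eval ⟨2 * s, (unitInterval.mul_pos_mem_iff zero_lt_two).2 ⟨s.2.1, hs⟩⟩ := by
      ext t
      show (H.trans G) (s, t) = _
      rw [Path.Homotopy.trans_apply, dif_pos hs]
      rfl
    rw [this]; exact hH _
  · have : (H.trans G).eval s =
        G.eval ⟨2 * s - 1, unitInterval.two_mul_sub_one_mem_iff.2 ⟨(not_le.1 hs).le, s.2.2⟩⟩ := by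
      ext t
      show (H.trans G) (s, t) = _
      rw [Path.Homotopy.trans_apply, dif_neg hs]
      rfl
    rw [this]; exact hG _

theorem htpyThrough_refl {x y : X} {a : Path x y} (h : a ∈ P x y) : HtpyThrough P a a := by
  refine ⟨Path.Homotopy.refl a, fun s => ?_⟩
  have : (Path.Homotopy.refl a).eval s = a := by ext t; rfl
  rwa [this]

theorem mem_cast {x y x' y' : X} (h1 : x' = x) (h2 : y' = y) {a : Path x y}
    (h : a ∈ P x y) : a.cast h1 h2 ∈ P x' y' := by
  subst h1; subst h2
  have : a.cast rfl rfl = a := by ext t; rfl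
  rwa [this]

theorem HtpyThrough.cast {x y x' y' : X} (h1 : x' = x) (h2 : y' = y) {a b : Path x y}
    (h : HtpyThrough P a b) : HtpyThrough P (a.cast h1 h2) (b.cast h1 h2) := by
  subst h1; subst h2
  have ha : a.cast rfl rfl = a := by ext t; rfl
  have hb : b.cast rfl rfl = b := by ext t; rfl
  rwa [ha, hb]

theorem cast_trans {x y z x' z' : X} (h1 : x' = x) (h2 : z' = z) (a : Path x y)
    (b : Path y z) :
    (a.cast h1 rfl).trans (b.cast rfl h2) = (a.trans b).cast h1 h2 := by
  subst h1; subst h2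
  ext t
  rfl

end Helpers

/-- an isomorphism `F : Π^t(X) → Π^t(Y)` of timelike homotopy
semicategories (presented on representatives: morphism maps `Fm`, `Gm` over the
mutually inverse object maps `f`, `g`, well defined on classes, functorial and
mutually inverse up to timelike homotopy) maps each refined chronological diamond
`I_X([c])` bijectively onto `I_Y(F[c])` via its object map `f`. -/
theorem stmt10 {X Y : Type*} [TopologicalSpace X] [TopologicalSpace Y]
    (PX : ∀ x y : X, Set (Path x y)) (PY : ∀ x y : Y, Set (Path x y))
    (f : X → Y) (g : Y → X) (hgf : ∀ x, g (f x) = x) (hfg : ∀ y, f (g y) = y)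
    (htransX : ∀ {x y z : X} (a : Path x y) (b : Path y z),
      a ∈ PX x y → b ∈ PX y z → a.trans b ∈ PX x z)
    (htransY : ∀ {x y z : Y} (a : Path x y) (b : Path y z),
      a ∈ PY x y → b ∈ PY y z → a.trans b ∈ PY x z)
    (Fm : ∀ {x y : X} (c : Path x y), c ∈ PX x y → Path (f x) (f y))
    (Gm : ∀ {x y : Y} (c : Path x y), c ∈ PY x y → Path (g x) (g y))
    (hFmem : ∀ {x y : X} (c : Path x y) (hc : c ∈ PX x y), Fm c hc ∈ PY (f x) (f y))
    (hGmem : ∀ {x y : Y} (c : Path x y) (hc : c ∈ PY x y), Gm c hc ∈ PX (g x) (g y))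
    -- `F` and `G` are well defined on timelike homotopy classes
    (hFhtpy : ∀ {x y : X} (c c' : Path x y) (hc : c ∈ PX x y) (hc' : c' ∈ PX x y),
      HtpyThrough PX c c' → HtpyThrough PY (Fm c hc) (Fm c' hc'))
    (hGhtpy : ∀ {x y : Y} (c c' : Path x y) (hc : c ∈ PY x y) (hc' : c' ∈ PY x y),
      HtpyThrough PY c c' → HtpyThrough PX (Gm c hc) (Gm c' hc'))
    -- `F` and `G` are functorial (preserve composition up to homotopy class)
    (hFcomp : ∀ {x y z : X} (a : Path x y) (b : Path y z)
      (ha : a ∈ PX x y) (hb : b ∈ PX y z),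
      HtpyThrough PY (Fm (a.trans b) (htransX a b ha hb)) ((Fm a ha).trans (Fm b hb)))
    (hGcomp : ∀ {x y z : Y} (a : Path x y) (b : Path y z)
      (ha : a ∈ PY x y) (hb : b ∈ PY y z),
      HtpyThrough PX (Gm (a.trans b) (htransY a b ha hb)) ((Gm a ha).trans (Gm b hb)))
    -- `F` and `G` are mutually inverse on homotopy classes of morphisms
    (hGF : ∀ {x y : X} (c : Path x y) (hc : c ∈ PX x y),
      HtpyThrough PX ((Gm (Fm c hc) (hFmem c hc)).cast (hgf x).symm (hgf y).symm) c)
    (hFG : ∀ {x y : Y} (c : Path x y) (hc : c ∈ PY x y),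
      HtpyThrough PY ((Fm (Gm c hc) (hGmem c hc)).cast (hfg x).symm (hfg y).symm) c)
    {x y : X} (c : Path x y) (hc : c ∈ PX x y) :
    Set.BijOn f (diam PX c) (diam PY (Fm c hc)) := by
  have hinj : Function.Injective f := Function.LeftInverse.injective hgf
  refine ⟨?_, hinj.injOn, ?_⟩
  · rintro z ⟨a, b, ha, hb, H⟩
    exact ⟨Fm a ha, Fm b hb, hFmem a ha, hFmem b hb,
      (hFcomp a b ha hb).symm.trans (hFhtpy (a.trans b) c (htransX a b ha hb) hc H)⟩
  · rintro w ⟨a, b, ha, hb, H⟩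
    refine ⟨g w, ⟨(Gm a ha).cast (hgf x).symm rfl, (Gm b hb).cast rfl (hgf y).symm,
      mem_cast _ _ (hGmem a ha), mem_cast _ _ (hGmem b hb), ?_⟩, hfg w⟩
    rw [cast_trans]
    have h1 : HtpyThrough PX ((Gm (a.trans b) (htransY a b ha hb)).cast
        (hgf x).symm (hgf y).symm) (((Gm a ha).trans (Gm b hb)).cast
        (hgf x).symm (hgf y).symm) := (hGcomp a b ha hb).cast _ _
    have h2 : HtpyThrough PX ((Gm (Fm c hc) (hFmem c hc)).cast
        (hgf x).symm (hgf y).symm) ((Gm (a.trans b) (htransY a b ha hb)).cast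
        (hgf x).symm (hgf y).symm) :=
      (hGhtpy (Fm c hc) (a.trans b) (hFmem c hc) (htransY a b ha hb) H.symm).cast _ _
    exact h1.symm.trans (h2.symm.trans (hGF c hc))
end

section
/- Let p : X̃ → X be a universal covering of a path connected, locally path connected space X. Then the induced map p_* : Π(X̃) → Π(X), [c̃] ↦ [p∘c̃], between topological fundamental groupoids is a covering map. -/
open unitInterval

/-- The map on topological fundamental groupoids induced by a continuous map. -/
def pushQuot {X Y : Type*} [TopologicalSpace X] [TopologicalSpace Y] (f : C(X, Y)) :
    FundGroupoidSpace X → FundGroupoidSpace Y :=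
  Quot.map (fun c => f.comp c) fun a b h => by
    obtain ⟨h0, h1, H, hH0, hH1, hHs0, hHs1⟩ := h
    refine ⟨by simp [h0], by simp [h1], f.comp H, ?_, ?_, ?_, ?_⟩ <;>
      intro t <;> simp [hH0, hH1, hHs0, hHs1]

/-!
Let `U ⊆ X` be evenly covered, with trivialization `H : p⁻¹(U) ≃ U × F`, and let `𝒱 ⊆ Π(X)` be
the open set of classes of paths starting in `U`. Then `p_*⁻¹(𝒱) ≃ 𝒱 × F`: send `[c']` to
`(p_*[c'], sheet of c'(0))`, and `([c], i)` to the class of the lift of `c` starting on sheet `i`.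
Unique path lifting makes the two maps inverse to each other, lifting of homotopies rel endpoints
makes the second one well defined, and lifting the whole family of paths starting in `U` at once
(homotopy lifting with that family as parameter space) makes it continuous, one sheet at a time
since `F` is discrete.
-/

open Topology

theorem pathHomotopicRel_iff_homotopicRel {X : Type*} [TopologicalSpace X] {c c' : C(I, X)} :
    PathHomotopicRel c c' ↔ c.HomotopicRel c' {0, 1} := by
  constructor
  · rintro ⟨-, -, H, H₀, H₁, Hs₀, Hs₁⟩
    refine ⟨⟨⟨H, H₀, H₁⟩, ?_⟩⟩
    rintro s t (rfl | rfl)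
    exacts [Hs₀ s, Hs₁ s]
  · rintro ⟨H⟩
    exact ⟨H.fst_eq_snd (.inl rfl), H.fst_eq_snd (.inr rfl), H.toContinuousMap, H.apply_zero,
      H.apply_one, fun s => H.eq_fst s (.inl rfl), fun s => H.eq_fst s (.inr rfl)⟩

namespace FundGroupoidSpace

variable {X Y : Type*} [TopologicalSpace X] [TopologicalSpace Y]

theorem mk_eq_mk_iff {c c' : C(I, X)} :
    Quot.mk PathHomotopicRel c = Quot.mk PathHomotopicRel c' ↔ c.HomotopicRel c' {0, 1} := by
  have hrel : PathHomotopicRel (X := X) = fun c c' => c.HomotopicRel c' {0, 1} :=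
    funext₂ fun _ _ => propext pathHomotopicRel_iff_homotopicRel
  have hequiv : Equivalence (PathHomotopicRel (X := X)) :=
    hrel ▸ ContinuousMap.HomotopicRel.equivalence
  refine ⟨fun h => ?_, fun h => Quot.sound (pathHomotopicRel_iff_homotopicRel.mpr h)⟩
  exact pathHomotopicRel_iff_homotopicRel.mp (hequiv.eqvGen_iff.mp (Quot.eqvGen_exact h))

def startPoint (v : FundGroupoidSpace X) : X := (startEndMap v).1

theorem continuous_startPoint : Continuous (startPoint (X := X)) :=
  isQuotientMap_quot_mk.continuous_iff.mpr (continuous_eval_const 0)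

theorem continuous_pushQuot (f : C(X, Y)) : Continuous (pushQuot f) :=
  isQuotientMap_quot_mk.continuous_iff.mpr (continuous_quot_mk.comp f.continuous_postcomp)

theorem startPoint_pushQuot (f : C(X, Y)) (v : FundGroupoidSpace X) :
    startPoint (pushQuot f v) = f (startPoint v) := by
  induction v using Quot.ind
  rfl

end FundGroupoidSpace

theorem IsCoveringMap.continuous_liftPath {X X' A : Type*} [TopologicalSpace X]
    [TopologicalSpace X'] [TopologicalSpace A] {p : X' → X} (hp : IsCoveringMap p)
    {γ : A → C(I, X)} (hγ : Continuous γ) {e : A → X'} (he : Continuous e)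
    (h : ∀ a, γ a 0 = p (e a)) :
    Continuous fun a => hp.liftPath (γ a) (e a) (h a) := by
  let Γ : C(I × A, X) := ⟨fun ta => γ ta.2 ta.1,
    continuous_eval.comp ((hγ.comp continuous_snd).prodMk continuous_fst)⟩
  refine ((hp.liftHomotopy Γ ⟨e, he⟩ h).comp .prodSwap).curry.continuous.congr fun a => ?_
  exact ((hp.eq_liftPath_iff' (h a)).mpr ⟨funext fun t => congr_fun
    (hp.liftHomotopy_lifts Γ ⟨e, he⟩ h) (t, a), hp.liftHomotopy_zero Γ ⟨e, he⟩ h a⟩).symm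

open FundGroupoidSpace

section LocalTrivialization

variable {X X' : Type*} [TopologicalSpace X] [TopologicalSpace X'] {p : X' → X}
  (hp : IsCoveringMap p) {U : Set X} (hU : IsOpen U) {F : Type*} [TopologicalSpace F]
  (H : p ⁻¹' U ≃ₜ U × F) (hH : ∀ e, (H e).1.1 = p e)

include hH in
theorem proj_homeomorph_symm (x : U) (i : F) : p (H.symm (x, i)) = x := by
  rw [← hH, H.apply_symm_apply]

include hH in
theorem homeomorph_symm_proj_snd (e : p ⁻¹' U) :
    H.symm (⟨p e, hH e ▸ (H e).1.2⟩, (H e).2) = e := by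
  rw [H.symm_apply_eq]
  exact Prod.ext (Subtype.ext (hH e).symm) rfl

noncomputable def liftPathFromSheet (i : F) :
    C(Quot.mk PathHomotopicRel ⁻¹' (startPoint ⁻¹' U), FundGroupoidSpace X') :=
  ⟨fun c => Quot.mk _ (hp.liftPath c.1 (H.symm (⟨c.1 0, c.2⟩, i))
      (proj_homeomorph_symm H hH ⟨c.1 0, c.2⟩ i).symm),
    continuous_quot_mk.comp <|
      hp.continuous_liftPath continuous_subtype_val (by fun_prop) _⟩

theorem liftPathFromSheet_factorsThrough (i : F) :
    Function.FactorsThrough (liftPathFromSheet hp H hH i)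
      ((startPoint ⁻¹' U).restrictPreimage (Quot.mk PathHomotopicRel)) := by
  intro c c' hcc'
  have h := mk_eq_mk_iff.mp (congrArg Subtype.val hcc')
  have h0 : (⟨c.1 0, c.2⟩ : U) = ⟨c'.1 0, c'.2⟩ := Subtype.ext (h.fst_eq_snd (.inl rfl))
  refine mk_eq_mk_iff.mpr ?_
  simpa only [h0] using hp.homotopicRel_liftPath h (H.symm (⟨c.1 0, c.2⟩, i))
    (proj_homeomorph_symm H hH ⟨c.1 0, c.2⟩ i).symm
    (by rw [h0]; exact (proj_homeomorph_symm H hH ⟨c'.1 0, c'.2⟩ i).symm)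

noncomputable def liftClassFromSheet (i : F) : C(startPoint ⁻¹' U, FundGroupoidSpace X') :=
  (isQuotientMap_quot_mk.restrictPreimage_isOpen (hU.preimage continuous_startPoint)).lift
    (f := ContinuousMap.restrictPreimage ⟨Quot.mk _, continuous_quot_mk⟩ _)
    (liftPathFromSheet hp H hH i) (liftPathFromSheet_factorsThrough hp H hH i)

theorem liftClassFromSheet_comp (i : F) :
    (liftClassFromSheet hp hU H hH i).comp
      (ContinuousMap.restrictPreimage ⟨Quot.mk _, continuous_quot_mk⟩ _) =
        liftPathFromSheet hp H hH i :=
  IsQuotientMap.lift_comp ..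

theorem liftClassFromSheet_mk (i : F) (c : C(I, X)) (hc : Quot.mk _ c ∈ startPoint ⁻¹' U) :
    liftClassFromSheet hp hU H hH i ⟨Quot.mk _ c, hc⟩ =
      Quot.mk _ (hp.liftPath c (H.symm (⟨c 0, hc⟩, i))
        (proj_homeomorph_symm H hH ⟨c 0, hc⟩ i).symm) :=
  DFunLike.congr_fun (liftClassFromSheet_comp hp hU H hH i) ⟨c, hc⟩

theorem pushQuot_liftClassFromSheet (i : F) (v : startPoint ⁻¹' U) :
    pushQuot ⟨p, hp.continuous⟩ (liftClassFromSheet hp hU H hH i v) = v := by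
  obtain ⟨v, hv⟩ := v
  induction v using Quot.ind with | _ c =>
  rw [liftClassFromSheet_mk]
  exact congrArg (Quot.mk _) (ContinuousMap.ext (congrFun (hp.liftPath_lifts ..)))

theorem startPoint_liftClassFromSheet (i : F) (v : startPoint ⁻¹' U) :
    startPoint (liftClassFromSheet hp hU H hH i v) = H.symm (⟨startPoint v.1, v.2⟩, i) := by
  obtain ⟨v, hv⟩ := v
  induction v using Quot.ind with | _ c =>
  rw [liftClassFromSheet_mk]
  exact hp.liftPath_zero ..

variable [DiscreteTopology F]

noncomputable def pushQuotHomeomorph :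
    pushQuot ⟨p, hp.continuous⟩ ⁻¹' (startPoint ⁻¹' U) ≃ₜ startPoint ⁻¹' U × F where
  toFun u := (⟨pushQuot ⟨p, hp.continuous⟩ u, u.2⟩,
    (H ⟨startPoint u.1, by
      simpa only [Set.mem_preimage, startPoint_pushQuot, ContinuousMap.coe_mk] using u.2⟩).2)
  invFun vi := ⟨liftClassFromSheet hp hU H hH vi.2 vi.1, by
    rw [Set.mem_preimage, pushQuot_liftClassFromSheet]; exact vi.1.2⟩
  left_inv := by
    rintro ⟨u, hu⟩
    induction u using Quot.ind with | _ d =>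
    refine Subtype.ext ((liftClassFromSheet_mk ..).trans (congrArg (Quot.mk _) ?_))
    refine ((hp.eq_liftPath_iff' _).mpr ⟨rfl, ?_⟩).symm
    exact congrArg Subtype.val (homeomorph_symm_proj_snd H hH ⟨d 0, hu⟩).symm
  right_inv := by
    rintro ⟨⟨v, hv⟩, i⟩
    induction v using Quot.ind with | _ c =>
    refine Prod.ext (Subtype.ext (pushQuot_liftClassFromSheet hp hU H hH i _)) ?_
    simp only [startPoint_liftClassFromSheet, Subtype.coe_eta, Homeomorph.apply_symm_apply]
  continuous_toFun := by
    refine .prodMk (((continuous_pushQuot _).comp continuous_subtype_val).subtype_mk _) ?_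
    exact continuous_snd.comp <| H.continuous.comp <|
      (continuous_startPoint.comp continuous_subtype_val).subtype_mk _
  continuous_invFun := by
    refine .subtype_mk ?_ _
    exact continuous_prod_of_discrete_right.mpr fun i =>
      (liftClassFromSheet hp hU H hH i).continuous

end LocalTrivialization

theorem IsEvenlyCovered.pushQuot {X X' : Type*} [TopologicalSpace X] [TopologicalSpace X']
    {p : X' → X} (hp : IsCoveringMap p) {x : X} {F : Type*} [TopologicalSpace F]
    (h : IsEvenlyCovered p x F) {v : FundGroupoidSpace X} (hv : startPoint v = x) :
    IsEvenlyCovered (pushQuot ⟨p, hp.continuous⟩) v F := by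
  obtain ⟨hF, U, hxU, hU, -, H, hH⟩ := h
  have hV : IsOpen (startPoint ⁻¹' U) := hU.preimage continuous_startPoint
  exact ⟨hF, _, show startPoint v ∈ U from hv ▸ hxU, hV, hV.preimage (continuous_pushQuot _),
    pushQuotHomeomorph hp hU H hH, fun _ => rfl⟩

theorem stmt16_general {X X' : Type*} [TopologicalSpace X] [TopologicalSpace X']
    (p : X' → X) (hp : IsCoveringMap p) :
    IsCoveringMap (pushQuot ⟨p, hp.continuous⟩) :=
  fun v => ((hp (startPoint v)).pushQuot hp rfl).to_isEvenlyCovered_preimage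

theorem stmt16 {X X' : Type*} [TopologicalSpace X] [TopologicalSpace X']
    [PathConnectedSpace X] [LocallyPathConnectedSpace X]
    (p : X' → X) (hp : IsCoveringMap p) [SimplyConnectedSpace X'] :
    IsCoveringMap (pushQuot ⟨p, hp.continuous⟩) :=
  stmt16_general p hp
end

section
/- Let U ⊆ X be an open subset of a spacetime such that for each x,y ∈ U there is at most one timelike homotopy class of timelike paths in U from x to y. Let x,y ∈ U and c a future-directed timelike path in U from x to y with closure(I_U(x,y)) ⊆ U (closure taken in X). Then any timelike homotopy rel endpoints in X starting at c remains entirely inside U; consequently I_X([c]) = I_U(x,y). -/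
open unitInterval

/-- The chronological diamond `I_U(x,y)` of a subset `U`: points joined to `x`
and `y` by paths of the class `P` lying in `U`. -/
def diamIn {X : Type*} [TopologicalSpace X] (P : ∀ x y : X, Set (Path x y))
    (U : Set X) (x y : X) : Set X :=
  {z | ∃ (a : Path x z) (b : Path z y),
    a ∈ P x z ∧ b ∈ P z y ∧ (∀ t, a t ∈ U) ∧ (∀ t, b t ∈ U)}

/-!
Let `S` be the set of stages of the homotopy that lie in `U`; it is open because `I` is compact
and `U` is open, and `0 ∈ S`. Cutting a stage in `S` at an interior time exhibits its point there
as an element of `I_U(x,y)`. So `S` is also the set of stages whose interior points lie in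
`closure I_U(x,y) ⊆ U`, which is closed, and connectedness of `I` gives `S = I`. Hence every path
in the class of `c` stays in `U`, while uniqueness of homotopy classes in `U` gives the converse
inclusion `I_U(x,y) ⊆ I_X([c])`.
-/

section

variable {X : Type*} [TopologicalSpace X]

lemma Path.forall_trans_mem_iff {x y z : X} (a : Path x y) (b : Path y z) {U : Set X} :
    (∀ t, a.trans b t ∈ U) ↔ (∀ t, a t ∈ U) ∧ ∀ t, b t ∈ U := by
  simp only [← Set.range_subset_iff, Path.trans_range, Set.union_subset_iff]

lemma Path.Homotopy.isOpen_setOf_forall_eval_mem {x y : X} {p₀ p₁ : Path x y}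
    (H : Path.Homotopy p₀ p₁) {U : Set X} (hU : IsOpen U) :
    IsOpen {s : I | ∀ t, H.eval s t ∈ U} := by
  have : {s : I | ∀ t, H.eval s t ∈ U} =
      H.toHomotopy.toContinuousMap.curry ⁻¹' {f | Set.MapsTo f Set.univ U} := by
    ext s
    simp only [Set.mem_preimage, Set.mapsTo_univ_iff]
    rfl
  rw [this]
  exact (ContinuousMap.isOpen_setOfPred_mapsTo isCompact_univ hU).preimage (map_continuous _)

lemma mem_diamIn_of_eq (P : ∀ x y : X, Set (Path x y)) (U : Set X) {x x' y y' z : X}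
    (hx : x' = x) (hy : y' = y) (a : Path x' z) (b : Path z y') (ha : a ∈ P x' z)
    (hb : b ∈ P z y') (haU : ∀ t, a t ∈ U) (hbU : ∀ t, b t ∈ U) :
    z ∈ diamIn P U x y := by
  subst hx hy
  exact ⟨a, b, ha, hb, haU, hbU⟩

lemma Path.apply_mem_diamIn (P : ∀ x y : X, Set (Path x y))
    (hrestrict : ∀ {x y : X} (c : Path x y), c ∈ P x y →
      ∀ s t : I, s < t → c.restrictTo s t ∈ P (c s) (c t))
    {U : Set X} {x y : X} (γ : Path x y) (hγ : γ ∈ P x y) (hγU : ∀ t, γ t ∈ U)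
    {t : I} (h0t : 0 < t) (ht1 : t < 1) :
    γ t ∈ diamIn P U x y :=
  mem_diamIn_of_eq P U γ.source γ.target (γ.restrictTo 0 t) (γ.restrictTo t 1)
    (hrestrict γ hγ 0 t h0t) (hrestrict γ hγ t 1 ht1) (fun _ => hγU _) (fun _ => hγU _)

lemma Path.Homotopy.eval_mem_of_closure_diamIn_subset (P : ∀ x y : X, Set (Path x y))
    (hrestrict : ∀ {x y : X} (c : Path x y), c ∈ P x y →
      ∀ s t : I, s < t → c.restrictTo s t ∈ P (c s) (c t))
    {U : Set X} (hU : IsOpen U) {x y : X} {c d : Path x y} (hcU : ∀ t, c t ∈ U)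
    (hclos : closure (diamIn P U x y) ⊆ U) (H : Path.Homotopy c d)
    (hP : ∀ s, H.eval s ∈ P x y) (s t : I) :
    H.eval s t ∈ U := by
  have hx : x ∈ U := c.source ▸ hcU 0
  have hy : y ∈ U := c.target ▸ hcU 1
  set S₁ := {s : I | ∀ t, H.eval s t ∈ U}
  set S₂ := ⋂ t ∈ Set.Ioo (0 : I) 1, (H.eval · t) ⁻¹' closure (diamIn P U x y)
  have hS₁S₂ : S₁ ⊆ S₂ := fun s hs => Set.mem_iInter₂.2 fun _ ht =>
    subset_closure ((H.eval s).apply_mem_diamIn P hrestrict (hP s) hs ht.1 ht.2)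
  have hS₂S₁ : S₂ ⊆ S₁ := by
    intro s hs t
    rw [Set.mem_iInter₂] at hs
    rcases eq_or_ne t 0 with rfl | ht0
    · simpa using hx
    rcases eq_or_ne t 1 with rfl | ht1
    · simpa using hy
    exact hclos (hs t ⟨unitInterval.pos_iff_ne_zero.2 ht0, lt_of_le_of_ne t.2.2 ht1⟩)
  have hS₂ : IsClosed S₂ := isClosed_biInter fun t _ =>
    isClosed_closure.preimage (H.continuous.comp (continuous_id.prodMk continuous_const))
  have hS₁ : IsClopen S₁ :=
    ⟨(hS₁S₂.antisymm hS₂S₁).symm ▸ hS₂, H.isOpen_setOf_forall_eval_mem hU⟩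
  have h0 : (0 : I) ∈ S₁ := by simpa [S₁] using hcU
  exact (hS₁.eq_univ ⟨0, h0⟩ ▸ Set.mem_univ s : s ∈ S₁) t

lemma diam_subset_diamIn (P : ∀ x y : X, Set (Path x y)) {U : Set X} {x y : X} {c : Path x y}
    (hstay : ∀ (d : Path x y) (H : Path.Homotopy c d), (∀ s, H.eval s ∈ P x y) →
      ∀ s t, H.eval s t ∈ U) :
    diam P c ⊆ diamIn P U x y := by
  rintro z ⟨a, b, ha, hb, H, hH⟩
  have habU : ∀ t, a.trans b t ∈ U := by
    simpa using hstay _ H.symm (fun s => hH (σ s)) 1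
  exact ⟨a, b, ha, hb, (Path.forall_trans_mem_iff a b).1 habU⟩

lemma diamIn_subset_diam (P : ∀ x y : X, Set (Path x y))
    (htrans : ∀ {x y z : X} (a : Path x y) (b : Path y z),
      a ∈ P x y → b ∈ P y z → a.trans b ∈ P x z)
    {U : Set X}
    (huniq : ∀ (w z : X) (a b : Path w z), a ∈ P w z → b ∈ P w z →
      (∀ t, a t ∈ U) → (∀ t, b t ∈ U) →
      ∃ H : Path.Homotopy a b, ∀ s : I, H.eval s ∈ P w z ∧ ∀ t, H.eval s t ∈ U)
    {x y : X} {c : Path x y} (hc : c ∈ P x y) (hcU : ∀ t, c t ∈ U) :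
    diamIn P U x y ⊆ diam P c := by
  rintro z ⟨a, b, ha, hb, haU, hbU⟩
  obtain ⟨H, hH⟩ := huniq x y (a.trans b) c (htrans a b ha hb) hc
    ((Path.forall_trans_mem_iff a b).2 ⟨haU, hbU⟩) hcU
  exact ⟨a, b, ha, hb, H, fun s => (hH s).1⟩

end

/-- if in the open set `U` timelike homotopy classes between fixed
endpoints are unique, `c` is a timelike path in `U` from `x` to `y`, and the
closure (in `X`) of `I_U(x,y)` is contained in `U`, then every timelike homotopy
rel endpoints in `X` starting at `c` stays in `U`; consequently
`I_X([c]) = I_U(x,y)`. -/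
theorem stmt18 {X : Type*} [TopologicalSpace X] (P : ∀ x y : X, Set (Path x y))
    (htrans : ∀ {x y z : X} (a : Path x y) (b : Path y z),
      a ∈ P x y → b ∈ P y z → a.trans b ∈ P x z)
    (hrestrict : ∀ {x y : X} (c : Path x y), c ∈ P x y →
      ∀ s t : I, s < t → c.restrictTo s t ∈ P (c s) (c t))
    (U : Set X) (hUopen : IsOpen U)
    -- at most one timelike homotopy class in `U` between any two points
    (huniq : ∀ (w z : X) (a b : Path w z), a ∈ P w z → b ∈ P w z →
      (∀ t, a t ∈ U) → (∀ t, b t ∈ U) →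
      ∃ H : Path.Homotopy a b, ∀ s : I, H.eval s ∈ P w z ∧ ∀ t, H.eval s t ∈ U)
    {x y : X} (c : Path x y) (hc : c ∈ P x y) (hcU : ∀ t, c t ∈ U)
    (hclos : closure (diamIn P U x y) ⊆ U) :
    (∀ (d : Path x y) (H : Path.Homotopy c d),
      (∀ s : I, H.eval s ∈ P x y) → ∀ s t : I, H.eval s t ∈ U) ∧
    diam P c = diamIn P U x y := by
  have hstay := fun d (H : Path.Homotopy c d) hP =>
    H.eval_mem_of_closure_diamIn_subset P hrestrict hUopen hcU hclos hP
  exact ⟨hstay, (diam_subset_diamIn P hstay).antisymm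
    (diamIn_subset_diam P htrans huniq hc hcU)⟩
end
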